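/- arXiv:1411.5861 — 2 statements merged into one kernel-verified Lean document; each statement's English description precedes it below -/
import Mathlib

section
/- For any full-rank lattice Λ in ℝⁿ, any x > 0, and any vector u ∈ ℝⁿ with u ∉ Λ, the translated Gaussian sum satisfies ∑_{t ∈ Λ} exp(−x‖t + u‖²) < ∑_{t ∈ Λ} exp(−x‖t‖²). -/
open scoped BigOperators

/-- The full-rank lattice `{M ω : ω ∈ ℤⁿ}` generated by the columns of `M`. -/
def latticeSet {n : ℕ} (M : Matrix (Fin n) (Fin n) ℝ) : Set (Fin n → ℝ) :=
  {v | ∃ ω : Fin n → ℤ, v = M.mulVec (fun j => (ω j : ℝ))}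

/-- The psi function `ψ_Λ(x) = ∑_{t ∈ Λ} exp(−x‖t‖²)` of the lattice generated by `M`. -/
noncomputable def psi {n : ℕ} (M : Matrix (Fin n) (Fin n) ℝ) (x : ℝ) : ℝ :=
  ∑' ω : Fin n → ℤ, Real.exp (-x * ∑ i, (M.mulVec (fun j => (ω j : ℝ)) i) ^ 2)

/-!
Write `θ(x, v) = ∑_ω exp(-x ‖ℓ ω + v‖²)`. Pairing lattice points `(ω, ω')` with
`(ω + ω', ω - ω')`, which have equal parities, the parallelogram law splits `θ(x, a) θ(x, b)` as
`∑_r C_r(a + b) C_r(a - b)`, where `C_r` is the Gaussian sum with parameter `x / 2` over the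
coset `r + 2ℤⁿ`. The cases `(0, 0)`, `(v, v)`, `(2v, 0)` combine to
`∑_r (C_r(0) - C_r(2v))² = θ(0)² - 2 θ(v)² + θ(2v) θ(0)`, so `2 θ(v)² ≤ θ(0)² + θ(0) sup θ`,
which forces `sup θ = θ(0)`. If `θ(x, u) = θ(x, 0)`, the term `r = 0` must vanish, which says
`θ(2x, u) = θ(2x, 0)`; iterating, `θ(2ᵏx, u) = θ(2ᵏx, 0) ≥ 1`, whereas `θ(y, u) → 0` as
`y → ∞` when `u` is off the lattice.
-/

open Real Filter Topology

theorem exp_neg_mul_norm_sq_mul_exp_neg_mul_norm_sq {E : Type*} [NormedAddCommGroup E]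
    [InnerProductSpace ℝ E] (x : ℝ) (a b : E) :
    exp (-x * ‖a‖ ^ 2) * exp (-x * ‖b‖ ^ 2) =
      exp (-(x / 2) * ‖a + b‖ ^ 2) * exp (-(x / 2) * ‖a - b‖ ^ 2) := by
  rw [← exp_add, ← exp_add]
  congr 1
  linear_combination (x / 2) * parallelogram_law_with_norm ℝ a b

theorem exp_neg_mul_norm_add_sq_le {E : Type*} [SeminormedAddCommGroup E] {x : ℝ} (hx : 0 ≤ x)
    (a b : E) : exp (-x * ‖a + b‖ ^ 2) ≤ exp (x * ‖b‖ ^ 2) * exp (-(x / 2) * ‖a‖ ^ 2) := by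
  rw [← exp_add, exp_le_exp]
  have h : ‖a‖ ≤ ‖a + b‖ + ‖b‖ := by simpa using norm_sub_le (a + b) b
  have : ‖a‖ ^ 2 ≤ 2 * ‖a + b‖ ^ 2 + 2 * ‖b‖ ^ 2 := by
    nlinarith [norm_nonneg a, sq_nonneg (‖a + b‖ - ‖b‖)]
  nlinarith

namespace Int

/-- Pairs `(m, m')` are parametrized by the common parity `r` of `m ± m'` and the halves
`σ`, `τ` of `m + m' - r` and `m - m' - r`. -/
def sumDiffEquiv : Bool × ℤ × ℤ ≃ ℤ × ℤ where
  toFun p := (p.2.1 + p.2.2 + cond p.1 1 0, p.2.1 - p.2.2)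
  invFun q := (bodd (q.1 + q.2), div2 (q.1 + q.2), div2 (q.1 - q.2))
  left_inv := by
    rintro ⟨r, σ, τ⟩
    have h₁ : σ + τ + cond r 1 0 + (σ - τ) = bit r σ := by rw [bit_val]; ring
    have h₂ : σ + τ + cond r 1 0 - (σ - τ) = bit r τ := by rw [bit_val]; ring
    simp only [h₁, h₂, bodd_bit, div2_bit]
  right_inv := by
    rintro ⟨m, m'⟩
    have hodd : bodd (m - m') = bodd (m + m') := by
      rw [sub_eq_add_neg, bodd_add, bodd_neg, bodd_add]
    have h₁ := bodd_add_div2 (m + m')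
    have h₂ := bodd_add_div2 (m - m')
    rw [hodd] at h₂
    ext <;> dsimp only <;> linarith

theorem sumDiffEquiv_add (p : Bool × ℤ × ℤ) :
    (sumDiffEquiv p).1 + (sumDiffEquiv p).2 = bit p.1 p.2.1 := by
  simp only [sumDiffEquiv, Equiv.coe_fn_mk, bit_val]; ring

theorem sumDiffEquiv_sub (p : Bool × ℤ × ℤ) :
    (sumDiffEquiv p).1 - (sumDiffEquiv p).2 = bit p.1 p.2.2 := by
  simp only [sumDiffEquiv, Equiv.coe_fn_mk, bit_val]; ring

end Int

def piSumDiffEquiv (ι : Type*) : (ι → Bool) × (ι → ℤ) × (ι → ℤ) ≃ (ι → ℤ) × (ι → ℤ) :=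
  ((Equiv.refl _).prodCongr (Equiv.arrowProdEquivProdArrow _ _ _).symm).trans <|
    (Equiv.arrowProdEquivProdArrow _ _ _).symm.trans <|
      (Equiv.piCongrRight fun _ => Int.sumDiffEquiv).trans (Equiv.arrowProdEquivProdArrow _ _ _)

theorem piSumDiffEquiv_add {ι : Type*} (p : (ι → Bool) × (ι → ℤ) × (ι → ℤ)) :
    (piSumDiffEquiv ι p).1 + (piSumDiffEquiv ι p).2 = fun i => Int.bit (p.1 i) (p.2.1 i) :=
  funext fun i => Int.sumDiffEquiv_add (p.1 i, p.2.1 i, p.2.2 i)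

theorem piSumDiffEquiv_sub {ι : Type*} (p : (ι → Bool) × (ι → ℤ) × (ι → ℤ)) :
    (piSumDiffEquiv ι p).1 - (piSumDiffEquiv ι p).2 = fun i => Int.bit (p.1 i) (p.2.2 i) :=
  funext fun i => Int.sumDiffEquiv_sub (p.1 i, p.2.1 i, p.2.2 i)

theorem le_of_forall_two_mul_sq_le {α : Type*} {g : α → ℝ} (hbdd : BddAbove (Set.range g))
    (hg : ∀ v, 0 ≤ g v) {a : ℝ} (ha : 0 ≤ a) (h : ∀ v, ∃ w, 2 * g v ^ 2 ≤ a ^ 2 + a * g w)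
    (v : α) : g v ≤ a := by
  have : Nonempty α := ⟨v⟩
  have hS : ∀ w, g w ≤ ⨆ w, g w := le_ciSup hbdd
  set S := ⨆ w, g w
  have hS0 : 0 ≤ S := (hg v).trans (hS v)
  have hc : 0 ≤ (a ^ 2 + a * S) / 2 :=
    div_nonneg (add_nonneg (sq_nonneg a) (mul_nonneg ha hS0)) zero_le_two
  have hSsq : S ≤ √((a ^ 2 + a * S) / 2) := ciSup_le fun v => by
    obtain ⟨w, hw⟩ := h v
    rw [Real.le_sqrt (hg v) hc]
    nlinarith [hS w]
  rw [Real.le_sqrt hS0 hc] at hSsq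
  nlinarith [hS v]

section LatticeTheta

variable {ι E : Type*} [NormedAddCommGroup E] (ℓ : (ι → ℤ) →+ E)

noncomputable def latticeTheta (x : ℝ) (v : E) : ℝ :=
  ∑' ω, exp (-x * ‖ℓ ω + v‖ ^ 2)

/-- The part of `latticeTheta ℓ x v` coming from the coset `r + 2ℤ^ι`, whose points are
`Int.bit (r i) (σ i) = 2 σ i + r i`. -/
noncomputable def cosetTheta (x : ℝ) (v : E) (r : ι → Bool) : ℝ :=
  ∑' σ : ι → ℤ, exp (-x * ‖ℓ (fun i => Int.bit (r i) (σ i)) + v‖ ^ 2)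

def GaussianSummable : Prop :=
  ∀ x > 0, Summable fun ω => exp (-x * ‖ℓ ω‖ ^ 2)

variable {ℓ}

theorem GaussianSummable.summable (hℓ : GaussianSummable ℓ) {x : ℝ} (hx : 0 < x) (v : E) :
    Summable fun ω => exp (-x * ‖ℓ ω + v‖ ^ 2) :=
  ((hℓ (x / 2) (half_pos hx)).mul_left (exp (x * ‖v‖ ^ 2))).of_nonneg_of_le
    (fun _ => (exp_pos _).le) fun _ => exp_neg_mul_norm_add_sq_le hx.le _ _

theorem GaussianSummable.summable_coset (hℓ : GaussianSummable ℓ) {x : ℝ} (hx : 0 < x) (v : E)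
    (r : ι → Bool) :
    Summable fun σ : ι → ℤ => exp (-x * ‖ℓ (fun i => Int.bit (r i) (σ i)) + v‖ ^ 2) :=
  (hℓ.summable hx v).comp_injective fun σ τ h => funext fun i => by
    simpa only [Int.div2_bit] using congrArg Int.div2 (congrFun h i)

theorem latticeTheta_nonneg (x : ℝ) (v : E) : 0 ≤ latticeTheta ℓ x v :=
  tsum_nonneg fun _ => (exp_pos _).le

theorem one_le_latticeTheta_zero (hℓ : GaussianSummable ℓ) {x : ℝ} (hx : 0 < x) :
    1 ≤ latticeTheta ℓ x 0 := by
  simpa [latticeTheta] using (hℓ.summable hx 0).le_tsum 0 fun _ _ => (exp_pos _).le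

theorem latticeTheta_add_map (x : ℝ) (v : E) (ρ : ι → ℤ) :
    latticeTheta ℓ x (v + ℓ ρ) = latticeTheta ℓ x v := by
  rw [latticeTheta, latticeTheta, ← (Equiv.subRight ρ).tsum_eq]
  refine tsum_congr fun ω => ?_
  rw [Equiv.subRight_apply, map_sub, show ℓ ω - ℓ ρ + (v + ℓ ρ) = ℓ ω + v by abel]

theorem latticeTheta_le (hℓ : GaussianSummable ℓ) {x : ℝ} (hx : 0 < x) (v : E) :
    latticeTheta ℓ x v ≤ exp (x * ‖v‖ ^ 2) * latticeTheta ℓ (x / 2) 0 := by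
  rw [latticeTheta, latticeTheta, ← tsum_mul_left]
  simp only [add_zero]
  exact (hℓ.summable hx v).tsum_le_tsum (fun _ => exp_neg_mul_norm_add_sq_le hx.le _ _)
    ((hℓ _ (half_pos hx)).mul_left _)

theorem tendsto_latticeTheta_atTop (hℓ : GaussianSummable ℓ) {u : E} (hu : ∀ ω, ℓ ω + u ≠ 0) :
    Tendsto (fun x => latticeTheta ℓ x u) atTop (𝓝 0) := by
  have hlim (ω : ι → ℤ) : Tendsto (fun x => exp (-x * ‖ℓ ω + u‖ ^ 2)) atTop (𝓝 0) :=
    tendsto_exp_atBot.comp <|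
      tendsto_neg_atTop_atBot.atBot_mul_const (by positivity [norm_pos_iff.2 (hu ω)])
  have hdom : ∀ᶠ x in atTop, ∀ ω, ‖exp (-x * ‖ℓ ω + u‖ ^ 2)‖ ≤ exp (-1 * ‖ℓ ω + u‖ ^ 2) := by
    filter_upwards [eventually_ge_atTop 1] with x hx ω
    rw [norm_of_nonneg (exp_pos _).le, exp_le_exp]
    nlinarith [sq_nonneg ‖ℓ ω + u‖]
  simpa [latticeTheta] using tendsto_tsum_of_dominated_convergence (hℓ.summable one_pos u) hlim hdom

theorem bddAbove_range_latticeTheta (hℓ : GaussianSummable ℓ)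
    (hR : ∃ R, ∀ v, ∃ ω, ‖v - ℓ ω‖ ≤ R) {x : ℝ} (hx : 0 < x) :
    BddAbove (Set.range (latticeTheta ℓ x)) := by
  obtain ⟨R, hR⟩ := hR
  refine ⟨exp (x * R ^ 2) * latticeTheta ℓ (x / 2) 0, ?_⟩
  rintro _ ⟨v, rfl⟩
  obtain ⟨ω, hω⟩ := hR v
  calc latticeTheta ℓ x v = latticeTheta ℓ x (v - ℓ ω) := by
        rw [sub_eq_add_neg, ← map_neg, latticeTheta_add_map]
    _ ≤ exp (x * ‖v - ℓ ω‖ ^ 2) * latticeTheta ℓ (x / 2) 0 := latticeTheta_le hℓ hx _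
    _ ≤ exp (x * R ^ 2) * latticeTheta ℓ (x / 2) 0 := by
        have := (norm_nonneg _).trans hω
        gcongr
        exact latticeTheta_nonneg _ _

variable [InnerProductSpace ℝ E]

theorem cosetTheta_two_smul (x : ℝ) (v : E) :
    cosetTheta ℓ x ((2 : ℝ) • v) (fun _ => false) = latticeTheta ℓ (4 * x) v := by
  refine tsum_congr fun σ => ?_
  have : ℓ (fun i => Int.bit false (σ i)) = (2 : ℝ) • ℓ σ := by
    rw [show (fun i => Int.bit false (σ i)) = 2 • σ from rfl, map_nsmul, two_nsmul, two_smul]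
  rw [this, ← smul_add, norm_smul, Real.norm_two]
  congr 1
  ring

variable [Fintype ι] [DecidableEq ι]

theorem latticeTheta_mul_latticeTheta (hℓ : GaussianSummable ℓ) {x : ℝ} (hx : 0 < x) (a b : E) :
    latticeTheta ℓ x a * latticeTheta ℓ x b =
      ∑ r, cosetTheta ℓ (x / 2) (a + b) r * cosetTheta ℓ (x / 2) (a - b) r := by
  set F : (ι → ℤ) × (ι → ℤ) → ℝ := fun z => exp (-x * ‖ℓ z.1 + a‖ ^ 2) * exp (-x * ‖ℓ z.2 + b‖ ^ 2)
  set g : (ι → Bool) → E → (ι → ℤ) → ℝ := fun r γ σ =>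
    exp (-(x / 2) * ‖ℓ (fun i => Int.bit (r i) (σ i)) + γ‖ ^ 2)
  have hF : ∀ p, F (piSumDiffEquiv ι p) = g p.1 (a + b) p.2.1 * g p.1 (a - b) p.2.2 := by
    intro p
    simp only [F, g]
    rw [exp_neg_mul_norm_sq_mul_exp_neg_mul_norm_sq, add_add_add_comm, add_sub_add_comm,
      ← map_add, ← map_sub, piSumDiffEquiv_add, piSumDiffEquiv_sub]
  have hsum (r : ι → Bool) (γ : E) : Summable (g r γ) := hℓ.summable_coset (half_pos hx) γ r
  have hpos (r : ι → Bool) (γ : E) : 0 ≤ g r γ := fun _ => (exp_pos _).le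
  have hfib (r : ι → Bool) :
      Summable fun q : (ι → ℤ) × (ι → ℤ) => g r (a + b) q.1 * g r (a - b) q.2 :=
    (hsum r _).mul_of_nonneg (hsum r _) (hpos r _) (hpos r _)
  have hFsum : Summable F := (hℓ.summable hx a).mul_of_nonneg (hℓ.summable hx b)
    (fun _ => (exp_pos _).le) (fun _ => (exp_pos _).le)
  have hGsum : Summable fun p : (ι → Bool) × (ι → ℤ) × (ι → ℤ) =>
      g p.1 (a + b) p.2.1 * g p.1 (a - b) p.2.2 :=
    ((piSumDiffEquiv ι).summable_iff (f := F) |>.2 hFsum).congr hF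
  calc latticeTheta ℓ x a * latticeTheta ℓ x b = ∑' z, F z :=
        (hℓ.summable hx a).tsum_mul_tsum (hℓ.summable hx b) hFsum
    _ = ∑' p : (ι → Bool) × (ι → ℤ) × (ι → ℤ), g p.1 (a + b) p.2.1 * g p.1 (a - b) p.2.2 := by
        rw [← (piSumDiffEquiv ι).tsum_eq]
        exact tsum_congr hF
    _ = ∑ r, cosetTheta ℓ (x / 2) (a + b) r * cosetTheta ℓ (x / 2) (a - b) r := by
        rw [hGsum.tsum_prod' hfib, tsum_fintype]
        exact Finset.sum_congr rfl fun r _ => ((hsum r _).tsum_mul_tsum (hsum r _) (hfib r)).symm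

theorem sum_sq_sub_cosetTheta (hℓ : GaussianSummable ℓ) {x : ℝ} (hx : 0 < x) (v : E) :
    ∑ r, (cosetTheta ℓ (x / 2) 0 r - cosetTheta ℓ (x / 2) ((2 : ℝ) • v) r) ^ 2 =
      latticeTheta ℓ x 0 ^ 2 - 2 * latticeTheta ℓ x v ^ 2 +
        latticeTheta ℓ x ((2 : ℝ) • v) * latticeTheta ℓ x 0 := by
  have h₀ := latticeTheta_mul_latticeTheta hℓ hx (0 : E) 0
  have h₁ := latticeTheta_mul_latticeTheta hℓ hx v v
  have h₂ := latticeTheta_mul_latticeTheta hℓ hx ((2 : ℝ) • v) 0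
  simp only [add_zero, sub_zero, sub_self, ← two_smul ℝ v] at h₀ h₁ h₂
  rw [sq, sq, h₀, h₁, h₂, Finset.mul_sum, ← Finset.sum_sub_distrib, ← Finset.sum_add_distrib]
  exact Finset.sum_congr rfl fun r _ => by ring

theorem latticeTheta_le_latticeTheta_zero (hℓ : GaussianSummable ℓ)
    (hR : ∃ R, ∀ v, ∃ ω, ‖v - ℓ ω‖ ≤ R) {x : ℝ} (hx : 0 < x) (v : E) :
    latticeTheta ℓ x v ≤ latticeTheta ℓ x 0 := by
  refine le_of_forall_two_mul_sq_le (bddAbove_range_latticeTheta hℓ hR hx)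
    (latticeTheta_nonneg x) (latticeTheta_nonneg x 0) (fun v => ⟨(2 : ℝ) • v, ?_⟩) v
  have := sum_sq_sub_cosetTheta hℓ hx v
  have := Finset.sum_nonneg fun r (_ : r ∈ Finset.univ) =>
    sq_nonneg (cosetTheta ℓ (x / 2) 0 r - cosetTheta ℓ (x / 2) ((2 : ℝ) • v) r)
  linarith

theorem latticeTheta_two_mul_eq (hℓ : GaussianSummable ℓ) (hR : ∃ R, ∀ v, ∃ ω, ‖v - ℓ ω‖ ≤ R)
    {x : ℝ} (hx : 0 < x) {u : E} (hu : latticeTheta ℓ x u = latticeTheta ℓ x 0) :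
    latticeTheta ℓ (2 * x) u = latticeTheta ℓ (2 * x) 0 := by
  have hle := mul_le_mul_of_nonneg_right
    (latticeTheta_le_latticeTheta_zero hℓ hR hx ((2 : ℝ) • u)) (latticeTheta_nonneg (ℓ := ℓ) x 0)
  have hzero : ∑ r, (cosetTheta ℓ (x / 2) 0 r - cosetTheta ℓ (x / 2) ((2 : ℝ) • u) r) ^ 2 = 0 :=
    le_antisymm (by rw [sum_sq_sub_cosetTheta hℓ hx u, hu]; nlinarith)
      (Finset.sum_nonneg fun _ _ => sq_nonneg _)
  have hfalse := (Finset.sum_eq_zero_iff_of_nonneg fun _ _ => sq_nonneg _).1 hzero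
    (fun _ => false) (Finset.mem_univ _)
  rw [pow_eq_zero_iff two_ne_zero, sub_eq_zero, ← smul_zero (2 : ℝ) (A := E), cosetTheta_two_smul,
    cosetTheta_two_smul, show 4 * (x / 2) = 2 * x by ring] at hfalse
  exact hfalse.symm

theorem latticeTheta_two_pow_mul_eq (hℓ : GaussianSummable ℓ)
    (hR : ∃ R, ∀ v, ∃ ω, ‖v - ℓ ω‖ ≤ R) {x : ℝ} (hx : 0 < x) {u : E}
    (hu : latticeTheta ℓ x u = latticeTheta ℓ x 0) (k : ℕ) :
    latticeTheta ℓ (2 ^ k * x) u = latticeTheta ℓ (2 ^ k * x) 0 := by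
  induction k with
  | zero => simpa using hu
  | succ k ih =>
    rw [pow_succ', mul_assoc]
    exact latticeTheta_two_mul_eq hℓ hR (by positivity) ih

end LatticeTheta

theorem latticeTheta_lt_latticeTheta_zero {ι E : Type*} [NormedAddCommGroup E]
    [InnerProductSpace ℝ E] [Fintype ι] [DecidableEq ι] {ℓ : (ι → ℤ) →+ E}
    (hℓ : GaussianSummable ℓ) (hR : ∃ R, ∀ v, ∃ ω, ‖v - ℓ ω‖ ≤ R) {x : ℝ} (hx : 0 < x) {u : E}
    (hu : u ∉ Set.range ℓ) : latticeTheta ℓ x u < latticeTheta ℓ x 0 := by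
  refine (latticeTheta_le_latticeTheta_zero hℓ hR hx u).lt_of_ne fun heq => ?_
  have hu' (ω : ι → ℤ) : ℓ ω + u ≠ 0 := fun h =>
    hu ⟨-ω, by rw [map_neg, neg_eq_of_add_eq_zero_right h]⟩
  have hlim : Tendsto (fun k : ℕ => latticeTheta ℓ (2 ^ k * x) 0) atTop (𝓝 0) := by
    simpa only [Function.comp_def, latticeTheta_two_pow_mul_eq hℓ hR hx heq] using
      (tendsto_latticeTheta_atTop hℓ hu').comp
        ((tendsto_pow_atTop_atTop_of_one_lt one_lt_two).atTop_mul_const hx)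
  have := ge_of_tendsto' hlim fun k => one_le_latticeTheta_zero hℓ (by positivity : 0 < 2 ^ k * x)
  linarith

theorem summable_prod_comp_pi {κ : Type*} {g : κ → ℝ} (hg : Summable g) (hg0 : 0 ≤ g)
    (ι : Type*) [Fintype ι] : Summable fun ω : ι → κ => ∏ i, g (ω i) := by
  suffices h : ∀ n, Summable fun ω : Fin n → κ => ∏ i, g (ω i) by
    let e := Fintype.equivFin ι
    refine ((e.arrowCongr (Equiv.refl κ)).summable_iff.2 (h _)).congr fun ω => ?_
    exact e.symm.prod_comp fun i => g (ω i)
  intro n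
  induction n with
  | zero => exact .of_finite
  | succ n ih =>
    refine (Fin.consEquiv fun _ => κ).summable_iff.1 ?_
    simpa [Function.comp_def, Fin.prod_univ_succ] using
      hg.mul_of_nonneg ih hg0 fun _ => Finset.prod_nonneg fun _ _ => hg0 _

theorem summable_exp_neg_mul_int_sq {a : ℝ} (ha : 0 < a) :
    Summable fun m : ℤ => exp (-a * m ^ 2) := by
  have h : Summable fun n : ℕ => exp (-a * (n : ℝ) ^ 2) :=
    Real.summable_exp_nat_mul_of_ge (neg_lt_zero.2 ha) fun n => by
      exact_mod_cast Nat.le_self_pow two_ne_zero n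
  exact .of_nat_of_neg (by simpa using h) (by simpa using h)

theorem summable_exp_neg_mul_sum_sq {ι : Type*} [Fintype ι] {a : ℝ} (ha : 0 < a) :
    Summable fun ω : ι → ℤ => exp (-a * ∑ i, (ω i : ℝ) ^ 2) :=
  (summable_prod_comp_pi (summable_exp_neg_mul_int_sq ha) (fun _ => (exp_pos _).le) ι).congr
    fun ω => by rw [Finset.mul_sum, exp_sum]

section MatrixLattice

open Matrix

variable {ι : Type*} [Fintype ι] (M : Matrix ι ι ℝ)

noncomputable def latticeHom : (ι → ℤ) →+ EuclideanSpace ℝ ι where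
  toFun ω := WithLp.toLp 2 (M *ᵥ fun j => (ω j : ℝ))
  map_zero' := by ext; simp [mulVec, dotProduct]
  map_add' a b := by ext; simp [mulVec, dotProduct, mul_add, Finset.sum_add_distrib]

theorem latticeHom_apply (ω : ι → ℤ) :
    latticeHom M ω = WithLp.toLp 2 (M *ᵥ fun j => (ω j : ℝ)) :=
  rfl

variable [DecidableEq ι] {M}

theorem exists_norm_sub_latticeHom_le (hM : M.det ≠ 0) :
    ∃ R, ∀ v, ∃ ω, ‖v - latticeHom M ω‖ ≤ R := by
  refine ⟨‖toEuclideanCLM (𝕜 := ℝ) M‖ * √(Fintype.card ι), fun v => ?_⟩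
  set w := M⁻¹ *ᵥ WithLp.ofLp v
  refine ⟨fun i => round (w i), ?_⟩
  have hv : v - latticeHom M (fun i => round (w i)) =
      toEuclideanCLM (𝕜 := ℝ) M (WithLp.toLp 2 (w - fun i => (round (w i) : ℝ))) := by
    rw [toEuclideanCLM_toLp, mulVec_sub, latticeHom_apply, mulVec_mulVec,
      mul_nonsing_inv M (isUnit_iff_ne_zero.2 hM), one_mulVec, WithLp.toLp_sub, WithLp.toLp_ofLp]
  rw [hv]
  refine ((toEuclideanCLM (𝕜 := ℝ) M).le_opNorm _).trans
    (mul_le_mul_of_nonneg_left ?_ (norm_nonneg _))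
  rw [EuclideanSpace.norm_eq]
  refine Real.sqrt_le_sqrt ?_
  calc ∑ i, ‖(WithLp.toLp 2 (w - fun i => (round (w i) : ℝ))).ofLp i‖ ^ 2
      ≤ ∑ _i : ι, (1 : ℝ) := Finset.sum_le_sum fun i _ => by
        have := abs_sub_round (w i)
        simp only [Pi.sub_apply, Real.norm_eq_abs, sq_abs]
        nlinarith [abs_nonneg (w i - round (w i)), sq_abs (w i - round (w i))]
    _ = Fintype.card ι := by simp

theorem gaussianSummable_latticeHom (hM : M.det ≠ 0) : GaussianSummable (latticeHom M) := by
  set K := ‖toEuclideanCLM (𝕜 := ℝ) M⁻¹‖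
  have hK (w : ι → ℝ) : ‖WithLp.toLp 2 w‖ ≤ K * ‖WithLp.toLp 2 (M *ᵥ w)‖ := by
    simpa [mulVec_mulVec, nonsing_inv_mul M (isUnit_iff_ne_zero.2 hM)] using
      (toEuclideanCLM (𝕜 := ℝ) M⁻¹).le_opNorm (WithLp.toLp 2 (M *ᵥ w))
  intro x hx
  refine (summable_exp_neg_mul_sum_sq (a := x / (K ^ 2 + 1)) (by positivity)).of_nonneg_of_le
    (fun _ => (exp_pos _).le) fun ω => exp_le_exp.2 ?_
  have hω := hK fun j => (ω j : ℝ)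
  rw [← sq_le_sq₀ (norm_nonneg _) (by positivity), mul_pow, EuclideanSpace.real_norm_sq_eq] at hω
  rw [latticeHom_apply, neg_mul, neg_mul, neg_le_neg_iff, div_mul_eq_mul_div,
    div_le_iff₀ (by positivity)]
  nlinarith [sq_nonneg K, sq_nonneg ‖WithLp.toLp 2 (M *ᵥ fun j => (ω j : ℝ))‖]

end MatrixLattice

theorem translated_gaussian_sum_lt {n : ℕ} (M : Matrix (Fin n) (Fin n) ℝ)
    (hM : M.det ≠ 0) (x : ℝ) (hx : 0 < x) (u : Fin n → ℝ) (hu : u ∉ latticeSet M) :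
    (∑' ω : Fin n → ℤ,
        Real.exp (-x * ∑ i, (M.mulVec (fun j => (ω j : ℝ)) i + u i) ^ 2)) < psi M x := by
  have key := latticeTheta_lt_latticeTheta_zero (gaussianSummable_latticeHom hM)
    (exists_norm_sub_latticeHom_le hM) hx (u := WithLp.toLp 2 u)
    (by rintro ⟨ω, hω⟩; exact hu ⟨ω, congrArg WithLp.ofLp hω.symm⟩)
  simpa [latticeTheta, psi, latticeHom, EuclideanSpace.real_norm_sq_eq] using key
end

section
/- Let Λ_o be the orthogonal lattice generated by a₁e₁, …, aₙeₙ (aᵢ > 0) and Λ_s any lattice generated by an upper triangular matrix with the same diagonal entries. Then for all x > 0, ψ_{Λ_s}(x) ≤ ψ_{Λ_o}(x) = ∏_{i=1}^n ∑_{ω ∈ ℤ} exp(−x ω² aᵢ²). -/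
open scoped BigOperators

/-!
For an upper triangular generator the first coordinate `ω₀` enters only the first row, as
`a₀ ω₀ + c` with `c` depending on the remaining coordinates. Summing over `ω₀` first therefore
produces a shifted one-dimensional theta sum `∑ₘ exp (-x (a₀ m + c)²)`, which is at most the
unshifted one: up to normalisation it is the Hurwitz kernel `evenKernel`, and by its functional
equation (Poisson summation) it is a positive multiple of `∑ₙ exp (-π n² / t) cos (2π n c / a₀)`,
largest at `c = 0`. Induction on the dimension bounds `ψ_{Λ_s}` by the product of the unshifted
sums, and for the diagonal generator every shift vanishes, so that product is `ψ_{Λ_o}`.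
-/

open Real ENNReal HurwitzZeta Matrix

theorem HurwitzZeta.cosKernel_le_cosKernel_zero (a : UnitAddCircle) (t : ℝ) :
    cosKernel a t ≤ cosKernel 0 t := by
  rcases le_or_gt t 0 with ht | ht
  · rw [cosKernel_undef _ ht, cosKernel_undef _ ht]
  induction a using QuotientAddGroup.induction_on with | H a =>
  have h0 := hasSum_int_cosKernel 0 ht
  simp only [QuotientAddGroup.mk_zero, Complex.ofReal_zero, mul_zero, zero_mul,
    Complex.exp_zero, one_mul, Complex.hasSum_ofReal] at h0
  calc cosKernel a t ≤ ‖(cosKernel a t : ℂ)‖ := by simpa using le_abs_self _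
    _ ≤ _ := (hasSum_int_cosKernel a ht).norm_le_of_bounded h0 fun n => by
        simp [Complex.norm_exp, sq]

theorem HurwitzZeta.evenKernel_le_evenKernel_zero (a : UnitAddCircle) (t : ℝ) :
    evenKernel a t ≤ evenKernel 0 t := by
  rcases le_or_gt t 0 with ht | ht
  · rw [evenKernel_undef _ ht, evenKernel_undef _ ht]
  rw [evenKernel_functional_equation, evenKernel_functional_equation]
  exact mul_le_mul_of_nonneg_left (cosKernel_le_cosKernel_zero a _) (by positivity)

theorem tsum_ofReal_exp_neg_mul_add_sq {x A : ℝ} (hx : 0 < x) (hA : A ≠ 0) (c : ℝ) :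
    ∑' m : ℤ, ENNReal.ofReal (exp (-x * (A * m + c) ^ 2))
      = ENNReal.ofReal (evenKernel ↑(c / A) (x * A ^ 2 / π)) := by
  have hsum := hasSum_int_evenKernel (c / A) (t := x * A ^ 2 / π) (by positivity)
  have hterm (m : ℤ) : -π * (m + c / A) ^ 2 * (x * A ^ 2 / π) = -x * (A * m + c) ^ 2 := by
    field_simp
  simp only [hterm] at hsum
  rw [← hsum.tsum_eq, ENNReal.ofReal_tsum_of_nonneg (fun _ => (exp_pos _).le) hsum.summable]

noncomputable def gaussTheta (x A : ℝ) : ℝ≥0∞ :=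
  ∑' m : ℤ, ENNReal.ofReal (exp (-x * (A * m) ^ 2))

theorem gaussTheta_eq_ofReal_evenKernel {x A : ℝ} (hx : 0 < x) (hA : A ≠ 0) :
    gaussTheta x A = ENNReal.ofReal (evenKernel 0 (x * A ^ 2 / π)) := by
  simpa [gaussTheta] using tsum_ofReal_exp_neg_mul_add_sq hx hA 0

theorem gaussTheta_ne_top {x A : ℝ} (hx : 0 < x) (hA : A ≠ 0) : gaussTheta x A ≠ ⊤ := by
  rw [gaussTheta_eq_ofReal_evenKernel hx hA]
  exact ofReal_ne_top

theorem tsum_ofReal_exp_neg_mul_add_sq_le_gaussTheta {x A : ℝ} (hx : 0 < x) (hA : A ≠ 0)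
    (c : ℝ) : ∑' m : ℤ, ENNReal.ofReal (exp (-x * (A * m + c) ^ 2)) ≤ gaussTheta x A := by
  rw [tsum_ofReal_exp_neg_mul_add_sq hx hA, gaussTheta_eq_ofReal_evenKernel hx hA]
  exact ofReal_le_ofReal (evenKernel_le_evenKernel_zero _ _)

theorem gaussTheta_toReal (x A : ℝ) :
    (gaussTheta x A).toReal = ∑' m : ℤ, exp (-x * (A * m) ^ 2) := by
  rw [gaussTheta, ENNReal.tsum_toReal_eq fun _ => ofReal_ne_top]
  simp only [toReal_ofReal (exp_pos _).le]

/-- In `ℝ≥0∞` sums rearrange without summability side conditions, and `psi` is recovered by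
`toReal` because `toReal ⊤ = 0` matches the junk value of a divergent `tsum`. -/
noncomputable def ennPsi {n : ℕ} (M : Matrix (Fin n) (Fin n) ℝ) (x : ℝ) : ℝ≥0∞ :=
  ∑' ω : Fin n → ℤ, ENNReal.ofReal (exp (-x * ∑ i, (M *ᵥ (fun j => (ω j : ℝ))) i ^ 2))

theorem psi_eq_toReal_ennPsi {n : ℕ} (M : Matrix (Fin n) (Fin n) ℝ) (x : ℝ) :
    psi M x = (ennPsi M x).toReal := by
  rw [ennPsi, ENNReal.tsum_toReal_eq fun _ => ofReal_ne_top]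
  simp only [psi, toReal_ofReal (exp_pos _).le]

theorem ennPsi_zero_dim (M : Matrix (Fin 0) (Fin 0) ℝ) (x : ℝ) : ennPsi M x = 1 := by
  simp [ennPsi]

theorem sum_sq_mulVec_cons {n : ℕ} (M : Matrix (Fin (n + 1)) (Fin (n + 1)) ℝ)
    (hcol : ∀ i : Fin n, M i.succ 0 = 0) (m : ℝ) (v : Fin n → ℝ) :
    ∑ i, (M *ᵥ Fin.cons m v) i ^ 2
      = (M 0 0 * m + ∑ j, M 0 j.succ * v j) ^ 2
        + ∑ i, (M.submatrix Fin.succ Fin.succ *ᵥ v) i ^ 2 := by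
  simp [Fin.sum_univ_succ, mulVec, dotProduct, hcol]

theorem ennPsi_succ {n : ℕ} (M : Matrix (Fin (n + 1)) (Fin (n + 1)) ℝ)
    (hcol : ∀ i : Fin n, M i.succ 0 = 0) (x : ℝ) :
    ennPsi M x = ∑' ω : Fin n → ℤ,
      ENNReal.ofReal (exp (-x * ∑ i, (M.submatrix Fin.succ Fin.succ *ᵥ (fun j => (ω j : ℝ))) i ^ 2))
        * ∑' m : ℤ, ENNReal.ofReal (exp (-x * (M 0 0 * m + ∑ j, M 0 j.succ * ω j) ^ 2)) := by
  rw [ennPsi, ← (Fin.consEquiv fun _ => ℤ).tsum_eq, ENNReal.tsum_prod', ENNReal.tsum_comm]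
  refine tsum_congr fun ω => ?_
  rw [← ENNReal.tsum_mul_left]
  refine tsum_congr fun m => ?_
  have hcons : (fun j => ((Fin.consEquiv (fun _ => ℤ) (m, ω) j : ℤ) : ℝ))
      = Fin.cons (m : ℝ) (fun j => (ω j : ℝ)) := by
    ext j; cases j using Fin.cases <;> simp [Fin.consEquiv]
  rw [hcons, sum_sq_mulVec_cons M hcol, mul_add, exp_add, ofReal_mul (exp_pos _).le, mul_comm]

theorem ennPsi_le_prod_gaussTheta {n : ℕ} (M : Matrix (Fin n) (Fin n) ℝ)
    (htri : M.BlockTriangular id) (hdiag : ∀ i, M i i ≠ 0) {x : ℝ} (hx : 0 < x) :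
    ennPsi M x ≤ ∏ i, gaussTheta x (M i i) := by
  induction n with
  | zero => simp [ennPsi_zero_dim]
  | succ n ih =>
    have htri' : (M.submatrix Fin.succ Fin.succ).BlockTriangular id :=
      fun i j hij => htri (Fin.succ_lt_succ_iff.2 hij)
    rw [ennPsi_succ M fun i => htri (Fin.succ_pos i), Fin.prod_univ_succ, mul_comm]
    calc _ ≤ ∑' ω : Fin n → ℤ, ENNReal.ofReal (exp (-x * ∑ i,
            (M.submatrix Fin.succ Fin.succ *ᵥ (fun j => (ω j : ℝ))) i ^ 2))
              * gaussTheta x (M 0 0) :=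
          ENNReal.tsum_le_tsum fun ω => mul_le_mul_right
            (tsum_ofReal_exp_neg_mul_add_sq_le_gaussTheta hx (hdiag 0) _) _
      _ = ennPsi (M.submatrix Fin.succ Fin.succ) x * gaussTheta x (M 0 0) := ENNReal.tsum_mul_right
      _ ≤ _ := mul_le_mul_left (ih _ htri' fun i => hdiag i.succ) _

theorem ennPsi_diagonal {n : ℕ} (a : Fin n → ℝ) (x : ℝ) :
    ennPsi (diagonal a) x = ∏ i, gaussTheta x (a i) := by
  induction n with
  | zero => simp [ennPsi_zero_dim]
  | succ n ih =>
    rw [ennPsi_succ _ fun i => diagonal_apply_ne _ (Fin.succ_ne_zero i), Fin.prod_univ_succ,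
      submatrix_diagonal _ _ (Fin.succ_injective n), ← ih, mul_comm, ennPsi,
      ← ENNReal.tsum_mul_right]
    simp [diagonal_apply_ne _ (Fin.succ_ne_zero _).symm, gaussTheta, Function.comp_def]

/-- Any lattice generated by an upper triangular matrix with the same positive diagonal as an
orthogonal lattice has a psi function bounded by that of the orthogonal lattice, which in turn
factors as a product of one-dimensional theta-type sums. -/
theorem psi_skewing_le_and_orthogonal_product {n : ℕ} (a : Fin n → ℝ) (ha : ∀ i, 0 < a i)
    (Ms : Matrix (Fin n) (Fin n) ℝ)
    (htri : Ms.BlockTriangular (id : Fin n → Fin n))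
    (hdiag : ∀ i, Ms i i = a i)
    (x : ℝ) (hx : 0 < x) :
    psi Ms x ≤ psi (Matrix.diagonal a) x ∧
    psi (Matrix.diagonal a) x = ∏ i, ∑' ω : ℤ, Real.exp (-x * (ω : ℝ) ^ 2 * a i ^ 2) := by
  have hfin : ennPsi (diagonal a) x ≠ ⊤ := by
    rw [ennPsi_diagonal]
    exact prod_ne_top fun i _ => gaussTheta_ne_top hx (ha i).ne'
  have hle : ennPsi Ms x ≤ ennPsi (diagonal a) x := by
    simpa [ennPsi_diagonal, hdiag] using
      ennPsi_le_prod_gaussTheta Ms htri (fun i => hdiag i ▸ (ha i).ne') hx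
  rw [psi_eq_toReal_ennPsi, psi_eq_toReal_ennPsi]
  refine ⟨toReal_mono hfin hle, ?_⟩
  rw [ennPsi_diagonal, toReal_prod]
  refine Finset.prod_congr rfl fun i _ => ?_
  rw [gaussTheta_toReal]
  ring_nf
end
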